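/- Let G = (V,E) be a connected finite simple graph containing no cycle of length 4, no cycle of length 5, and no cycle of length 6 (as subgraphs, not necessarily induced), with L(G) ≠ ∅, and let w : V → ℝ be a weight function. Then G is w-well-covered if and only if both of the following hold: (i) for every vertex v ∈ V \ L(G) and every maximal independent set M of the subgraph of G induced by D(v), w(v) = w(M) (where w(∅) = 0); and (ii) w(x) = w(y) for every edge xy of G with both endpoints in L(G). -/

import Mathlib

/-!
Both directions rest on generating pairs: if every vertex of `A` is adjacent to every vertex
of `B` and one independent set completes both `A` and `B` to maximal independent sets, then
`w(A) = w(B)` in a `w`-well-covered graph.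

For `v ∉ L(G)` and a maximal independent `M ⊆ D(v)`, the pair `{v}`, `M` is completed by
choosing, for each neighbour of `v` not dominated by `M`, a neighbour at distance two from `v`;
excluding `C₄` and `C₅` keeps these choices independent and away from `N[M]`. If `M = ∅`, the same
construction at an edge `uv` with `u` closer to `L(G)` yields `w(u) = w(v) + w(Y)` for a maximal
independent `Y ⊆ D(u)`, while `w(u) = w(Y)` by induction. Adjacent vertices of `L(G)` have the
same closed neighbourhood, which gives (ii).

Conversely, two maximal independent sets `S`, `T` are linked through maximal independent sets
until `S \ T` and `T \ S` are completely joined; without `C₄` one side is then a single vertex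
`v` and the other a set `M ⊆ N(v)`. If `v ∈ L(G)`, then `M = {m}` and (ii), or (i) at `m`, gives
`w(v) = w(m)`; otherwise replacing each `m ∈ M \ D(v)` by `D(m)` turns `M` into a maximal
independent subset of `D(v)` of the same weight, and (i) at `v` applies.
-/

namespace WC

variable {V : Type*}

/-- A set of vertices is independent if its elements are pairwise nonadjacent. -/
def IsIndep (G : SimpleGraph V) (S : Set V) : Prop :=
  S.Pairwise fun a b => ¬ G.Adj a b

/-- A maximal independent set: independent and not properly contained in another
independent set. -/
def IsMaxIndep (G : SimpleGraph V) (S : Set V) : Prop :=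
  IsIndep G S ∧ ∀ T : Set V, IsIndep G T → S ⊆ T → T = S

/-- A maximal independent set of the subgraph of `G` induced by `A`
(equivalently, a subset of `A`, independent in `G`, maximal among such). -/
def IsMaxIndepOn (G : SimpleGraph V) (A S : Set V) : Prop :=
  S ⊆ A ∧ IsIndep G S ∧ ∀ T : Set V, T ⊆ A → IsIndep G T → S ⊆ T → T = S

/-- The weight of a set of vertices: `w(S) = Σ_{s ∈ S} w(s)`. -/
noncomputable def wsum (w : V → ℝ) (S : Set V) : ℝ := ∑ᶠ x ∈ S, w x

/-- `G` is `w`-well-covered if all maximal independent sets have the same weight. -/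
def WWC (G : SimpleGraph V) (w : V → ℝ) : Prop :=
  ∀ S T : Set V, IsMaxIndep G S → IsMaxIndep G T → wsum w S = wsum w T

/-- `G` is well-covered if all maximal independent sets have the same cardinality. -/
def WellCovered (G : SimpleGraph V) : Prop :=
  ∀ S T : Set V, IsMaxIndep G S → IsMaxIndep G T → S.ncard = T.ncard

/-- `N(S)`, the set of vertices at distance exactly 1 from `S`. -/
def nbhd (G : SimpleGraph V) (S : Set V) : Set V :=
  {x | x ∉ S ∧ ∃ s ∈ S, G.Adj x s}

/-- `N[S]`, the set of vertices at distance at most 1 from `S`. -/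
def cnbhd (G : SimpleGraph V) (S : Set V) : Set V :=
  S ∪ {x | ∃ s ∈ S, G.Adj x s}

/-- `N₂(S)`, the set of vertices at distance exactly 2 from `S`. -/
def n2 (G : SimpleGraph V) (S : Set V) : Set V :=
  {x | x ∉ cnbhd G S ∧ ∃ y ∈ nbhd G S, G.Adj x y}

/-- `S` dominates `T` if `T ⊆ N[S]`. -/
def Dominates (G : SimpleGraph V) (S T : Set V) : Prop := T ⊆ cnbhd G S

/-- `D(v) = N(v) \ N(N₂(v))`. -/
def dSet (G : SimpleGraph V) (v : V) : Set V :=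
  G.neighborSet v \ nbhd G (n2 G {v})

/-- `L(G)`: vertices of degree 1, or of degree 2 lying on a triangle. -/
def lSet (G : SimpleGraph V) : Set V :=
  {v | (G.neighborSet v).ncard = 1 ∨
    ((G.neighborSet v).ncard = 2 ∧ ∃ a b, G.Adj v a ∧ G.Adj v b ∧ G.Adj a b)}

/-- `G` contains a cycle of length `k` as a (not necessarily induced) subgraph. -/
def HasCycleLen (G : SimpleGraph V) (k : ℕ) : Prop :=
  ∃ (u : V) (p : G.Walk u u), p.IsCycle ∧ p.length = k

/-- A vertex is simplicial if its closed neighborhood induces a complete subgraph. -/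
def Simplicial (G : SimpleGraph V) (v : V) : Prop :=
  ∀ a ∈ G.neighborSet v, ∀ b ∈ G.neighborSet v, a ≠ b → G.Adj a b

/-- `B` is an induced complete bipartite subgraph of `G` on (nonempty, disjoint)
parts `BX` and `BY`. -/
def IsCompleteBipartiteOn (G : SimpleGraph V) (BX BY : Set V) : Prop :=
  BX.Nonempty ∧ BY.Nonempty ∧ Disjoint BX BY ∧ IsIndep G BX ∧ IsIndep G BY ∧
    ∀ x ∈ BX, ∀ y ∈ BY, G.Adj x y

/-- `B` (on parts `BX`, `BY`) is a generating subgraph of `G`: there is an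
independent set `S` (a witness) such that `S ∪ BX` and `S ∪ BY` are both
maximal independent sets of `G`. -/
def IsGenerating (G : SimpleGraph V) (BX BY : Set V) : Prop :=
  ∃ S : Set V, IsIndep G S ∧ IsMaxIndep G (S ∪ BX) ∧ IsMaxIndep G (S ∪ BY)

/-- The edge `xy` is relating: there is an independent set `S` such that
`S ∪ {x}` and `S ∪ {y}` are both maximal independent sets of `G`. -/
def IsRelating (G : SimpleGraph V) (x y : V) : Prop :=
  G.Adj x y ∧ ∃ S : Set V, IsIndep G S ∧ IsMaxIndep G (S ∪ {x}) ∧ IsMaxIndep G (S ∪ {y})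

section Independence

variable {G : SimpleGraph V}

theorem IsIndep.not_adj {S : Set V} (hS : IsIndep G S) {x y : V} (hx : x ∈ S) (hy : y ∈ S) :
    ¬ G.Adj x y :=
  fun h => hS hx hy h.ne h

theorem IsIndep.mono {S T : Set V} (hT : IsIndep G T) (h : S ⊆ T) : IsIndep G S :=
  Set.Pairwise.mono h hT

theorem IsIndep.insert {S : Set V} {x : V} (hS : IsIndep G S) (hx : ∀ y ∈ S, ¬ G.Adj x y) :
    IsIndep G (insert x S) :=
  Set.pairwise_insert.2 ⟨hS, fun y hy _ => ⟨hx y hy, fun h => hx y hy h.symm⟩⟩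

theorem IsIndep.union {S T : Set V} (hS : IsIndep G S) (hT : IsIndep G T)
    (h : ∀ s ∈ S, ∀ t ∈ T, ¬ G.Adj s t) : IsIndep G (S ∪ T) :=
  Set.pairwise_union.2 ⟨hS, hT, fun s hs t ht _ => ⟨h s hs t ht, fun h' => h s hs t ht h'.symm⟩⟩

theorem mem_cnbhd {S : Set V} {x : V} : x ∈ cnbhd G S ↔ x ∈ S ∨ ∃ s ∈ S, G.Adj x s :=
  Iff.rfl

theorem mem_cnbhd_singleton {x c : V} : x ∈ cnbhd G {c} ↔ x = c ∨ G.Adj x c := by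
  simp [mem_cnbhd]

theorem mem_cnbhd_singleton_comm {x y : V} : x ∈ cnbhd G {y} ↔ y ∈ cnbhd G {x} := by
  simp only [mem_cnbhd_singleton, G.adj_comm, eq_comm]

theorem subset_cnbhd {S : Set V} : S ⊆ cnbhd G S := Set.subset_union_left

theorem cnbhd_of_adj {S : Set V} {x s : V} (hs : s ∈ S) (h : G.Adj x s) : x ∈ cnbhd G S :=
  Or.inr ⟨s, hs, h⟩

theorem cnbhd_mono {S T : Set V} (h : S ⊆ T) : cnbhd G S ⊆ cnbhd G T := by
  rintro x (hx | ⟨s, hs, hxs⟩)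
  exacts [subset_cnbhd (h hx), cnbhd_of_adj (h hs) hxs]

theorem cnbhd_union {S T : Set V} : cnbhd G (S ∪ T) = cnbhd G S ∪ cnbhd G T := by
  ext x
  simp only [Set.mem_union, mem_cnbhd]
  grind

theorem cnbhd_insert {S : Set V} {x : V} : cnbhd G (insert x S) = cnbhd G {x} ∪ cnbhd G S := by
  rw [Set.insert_eq, cnbhd_union]

theorem not_adj_of_notMem_cnbhd {S : Set V} {x s : V} (hx : x ∉ cnbhd G S)
    (hs : s ∈ S) : ¬ G.Adj x s :=
  fun h => hx (cnbhd_of_adj hs h)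

theorem isMaxIndepOn_iff {A S : Set V} :
    IsMaxIndepOn G A S ↔ S ⊆ A ∧ IsIndep G S ∧ A ⊆ cnbhd G S := by
  refine ⟨fun ⟨hSA, hS, hmax⟩ => ⟨hSA, hS, fun x hx => ?_⟩,
    fun ⟨hSA, hS, hdom⟩ => ⟨hSA, hS, fun T hTA hT hST => ?_⟩⟩
  · by_contra hxS
    have h := hmax _ (Set.insert_subset hx hSA)
      (hS.insert fun y hy => not_adj_of_notMem_cnbhd hxS hy) (Set.subset_insert x S)
    exact hxS (subset_cnbhd (h ▸ Set.mem_insert x S))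
  · refine Set.Subset.antisymm (fun t ht => ?_) hST
    rcases hdom (hTA ht) with h | ⟨s, hs, hts⟩
    exacts [h, absurd hts (hT.not_adj ht (hST hs))]

theorem isMaxIndep_iff {S : Set V} : IsMaxIndep G S ↔ IsIndep G S ∧ ∀ x, x ∈ cnbhd G S := by
  have : IsMaxIndep G S ↔ IsMaxIndepOn G Set.univ S := by
    simp [IsMaxIndep, IsMaxIndepOn]
  rw [this, isMaxIndepOn_iff]
  simp [Set.univ_subset_iff, Set.eq_univ_iff_forall]

theorem isMaxIndepOn_empty_iff {A : Set V} : IsMaxIndepOn G A ∅ ↔ A = ∅ := by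
  simp [isMaxIndepOn_iff, IsIndep, cnbhd, Set.subset_empty_iff]

theorem isMaxIndepOn_self {A : Set V} (hA : A.Subsingleton) : IsMaxIndepOn G A A :=
  isMaxIndepOn_iff.2 ⟨subset_rfl, fun _ hx _ hy hxy => absurd (hA hx hy) hxy, subset_cnbhd⟩

theorem exists_isMaxIndepOn_superset [Finite V] {A T : Set V} (hTA : T ⊆ A) (hT : IsIndep G T) :
    ∃ S, T ⊆ S ∧ IsMaxIndepOn G A S := by
  obtain ⟨S, hTS, hS⟩ :=
    Finite.exists_le_maximal (p := fun S : Set V => S ⊆ A ∧ IsIndep G S) ⟨hTA, hT⟩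
  exact ⟨S, hTS, hS.prop.1, hS.prop.2, fun U hUA hU hSU => hS.eq_of_superset ⟨hUA, hU⟩ hSU⟩

theorem exists_isMaxIndep_superset [Finite V] {T : Set V} (hT : IsIndep G T) :
    ∃ S, T ⊆ S ∧ IsMaxIndep G S := by
  obtain ⟨S, hTS, hS⟩ := exists_isMaxIndepOn_superset (Set.subset_univ T) hT
  obtain ⟨-, hSind, hdom⟩ := isMaxIndepOn_iff.1 hS
  exact ⟨S, hTS, isMaxIndep_iff.2 ⟨hSind, fun x => hdom (Set.mem_univ x)⟩⟩

end Independence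

section Weights

variable {w : V → ℝ}

theorem wsum_singleton (x : V) : wsum w {x} = w x := finsum_mem_singleton

theorem wsum_empty : wsum w (∅ : Set V) = 0 := finsum_mem_empty

variable [Finite V]

theorem wsum_union {S T : Set V} (h : Disjoint S T) : wsum w (S ∪ T) = wsum w S + wsum w T :=
  finsum_mem_union h (Set.toFinite S) (Set.toFinite T)

theorem wsum_insert {x : V} {S : Set V} (hx : x ∉ S) : wsum w (insert x S) = w x + wsum w S := by
  rw [Set.insert_eq, wsum_union (Set.disjoint_singleton_left.2 hx), wsum_singleton]

theorem wsum_inter_add_diff (S T : Set V) : wsum w (S ∩ T) + wsum w (S \ T) = wsum w S :=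
  finsum_mem_inter_add_sdiff T (Set.toFinite S)

end Weights

section Cycles

variable {G : SimpleGraph V}

theorem hasCycleLen_four {a b c d : V} (hac : a ≠ c) (hbd : b ≠ d)
    (hab : G.Adj a b) (hbc : G.Adj b c) (hcd : G.Adj c d) (hda : G.Adj d a) :
    HasCycleLen G 4 := by
  refine ⟨a, .cons hab (.cons hbc (.cons hcd (.cons hda .nil))), ?_, rfl⟩
  have := hab.ne; have := hbc.ne; have := hcd.ne; have := hda.ne
  simp_all [SimpleGraph.Walk.isCycle_def, SimpleGraph.Walk.isTrail_def, eq_comm]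

theorem hasCycleLen_five {a b c d e : V}
    (hac : a ≠ c) (had : a ≠ d) (hbd : b ≠ d) (hbe : b ≠ e) (hce : c ≠ e)
    (hab : G.Adj a b) (hbc : G.Adj b c) (hcd : G.Adj c d) (hde : G.Adj d e) (hea : G.Adj e a) :
    HasCycleLen G 5 := by
  refine ⟨a, .cons hab (.cons hbc (.cons hcd (.cons hde (.cons hea .nil)))), ?_, rfl⟩
  have := hab.ne; have := hbc.ne; have := hcd.ne; have := hde.ne; have := hea.ne
  simp_all [SimpleGraph.Walk.isCycle_def, SimpleGraph.Walk.isTrail_def, eq_comm]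

theorem hasCycleLen_six {a b c d e f : V}
    (hac : a ≠ c) (had : a ≠ d) (hae : a ≠ e) (hbd : b ≠ d) (hbe : b ≠ e) (hbf : b ≠ f)
    (hce : c ≠ e) (hcf : c ≠ f) (hdf : d ≠ f) (hab : G.Adj a b) (hbc : G.Adj b c)
    (hcd : G.Adj c d) (hde : G.Adj d e) (hef : G.Adj e f) (hfa : G.Adj f a) :
    HasCycleLen G 6 := by
  refine ⟨a, .cons hab (.cons hbc (.cons hcd (.cons hde (.cons hef (.cons hfa .nil))))), ?_, rfl⟩
  have := hab.ne; have := hbc.ne; have := hcd.ne; have := hde.ne; have := hef.ne; have := hfa.ne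
  simp_all [SimpleGraph.Walk.isCycle_def, SimpleGraph.Walk.isTrail_def, eq_comm]

theorem commonNeighbors_subsingleton (h4 : ¬ HasCycleLen G 4) {u v : V} (huv : u ≠ v) :
    (G.commonNeighbors u v).Subsingleton := by
  rintro x ⟨hux, hvx⟩ y ⟨huy, hvy⟩
  by_contra hxy
  exact h4 (hasCycleLen_four huv hxy hux hvx.symm hvy huy.symm)

end Cycles

section Neighbourhoods

variable {G : SimpleGraph V}

theorem mem_n2_singleton {v z : V} :
    z ∈ n2 G {v} ↔ z ≠ v ∧ ¬ G.Adj v z ∧ ∃ y, G.Adj v y ∧ G.Adj y z := by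
  simp only [n2, nbhd, mem_cnbhd_singleton, Set.mem_ofPred_eq, Set.mem_singleton_iff]
  constructor
  · rintro ⟨hz, y, ⟨-, _, rfl, hyv⟩, hzy⟩
    exact ⟨fun h => hz (Or.inl h), fun h => hz (Or.inr h.symm), y, hyv.symm, hzy.symm⟩
  · rintro ⟨hzv, hvz, y, hvy, hyz⟩
    refine ⟨fun h => h.elim hzv fun h => hvz h.symm, y, ⟨hvy.ne', v, rfl, hvy.symm⟩, hyz.symm⟩

theorem mem_n2_singleton_of_adj {v y z : V} (hzv : z ≠ v) (hvz : ¬ G.Adj v z)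
    (hvy : G.Adj v y) (hyz : G.Adj y z) : z ∈ n2 G {v} :=
  mem_n2_singleton.2 ⟨hzv, hvz, y, hvy, hyz⟩

theorem mem_dSet_iff {v x : V} : x ∈ dSet G v ↔ G.Adj v x ∧ ∀ z ∈ n2 G {v}, ¬ G.Adj x z := by
  refine ⟨fun ⟨hvx, hx⟩ => ⟨hvx, fun z hz hxz => hx ⟨?_, z, hz, hxz⟩⟩,
    fun ⟨hvx, hx⟩ => ⟨hvx, fun ⟨_, z, hz, hxz⟩ => hx z hz hxz⟩⟩
  exact fun h => (mem_n2_singleton.1 h).2.1 hvx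

theorem adj_of_mem_dSet {v x : V} (hx : x ∈ dSet G v) : G.Adj v x := hx.1

theorem exists_n2_of_notMem_dSet {v x : V} (hvx : G.Adj v x) (hx : x ∉ dSet G v) :
    ∃ z ∈ n2 G {v}, G.Adj x z := by
  by_contra! h
  exact hx (mem_dSet_iff.2 ⟨hvx, h⟩)

theorem cnbhd_subset_of_mem_dSet {v x : V} (hx : x ∈ dSet G v) : cnbhd G {x} ⊆ cnbhd G {v} := by
  intro y hy
  rcases mem_cnbhd_singleton.1 hy with rfl | hyx
  · exact mem_cnbhd_singleton.2 (Or.inr (adj_of_mem_dSet hx).symm)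
  by_contra hyv
  rw [mem_cnbhd_singleton, not_or] at hyv
  exact (mem_dSet_iff.1 hx).2 y
    (mem_n2_singleton_of_adj hyv.1 (fun h => hyv.2 h.symm) (adj_of_mem_dSet hx) hyx.symm) hyx.symm

theorem cnbhd_subset_of_subset_dSet {v : V} {M : Set V} (hM : M ⊆ dSet G v) :
    cnbhd G M ⊆ cnbhd G {v} := by
  rintro x (hx | ⟨m, hm, hxm⟩)
  · exact mem_cnbhd_singleton.2 (Or.inr (adj_of_mem_dSet (hM hx)).symm)
  · exact cnbhd_subset_of_mem_dSet (hM hm) (mem_cnbhd_singleton.2 (Or.inr hxm))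

theorem mem_dSet_of_adj_of_adj (h4 : ¬ HasCycleLen G 4) {u v x : V} (hx : x ∈ dSet G u)
    (huv : G.Adj u v) (hvx : G.Adj v x) : x ∈ dSet G v := by
  refine mem_dSet_iff.2 ⟨hvx, fun z hz hxz => ?_⟩
  obtain ⟨hzv, hvz, -⟩ := mem_n2_singleton.1 hz
  have hzx : z ∈ cnbhd G {x} := mem_cnbhd_singleton.2 (Or.inr hxz.symm)
  rcases mem_cnbhd_singleton.1 (cnbhd_subset_of_mem_dSet hx hzx) with rfl | hzu
  · exact hvz huv.symm
  · exact (adj_of_mem_dSet hx).ne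
      (commonNeighbors_subsingleton h4 hzv.symm ⟨huv.symm, hzu⟩ ⟨hvx, hxz.symm⟩)

end Neighbourhoods

section LSet

variable {G : SimpleGraph V}

theorem simplicial_of_mem_lSet {v : V} (hv : v ∈ lSet G) : Simplicial G v := by
  intro x hx y hy hxy
  rcases hv with h1 | ⟨h2, a, b, hva, hvb, hab⟩
  · obtain ⟨c, hc⟩ := Set.ncard_eq_one.1 h1
    rw [hc] at hx hy
    exact absurd (hx.trans hy.symm) hxy
  · have hsub : ({a, b} : Set V) ⊆ G.neighborSet v := Set.pair_subset hva hvb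
    have hN : G.neighborSet v = {a, b} :=
      (Set.eq_of_subset_of_ncard_le hsub (by rw [h2, Set.ncard_pair hab.ne])
        (Set.finite_of_ncard_ne_zero (by omega))).symm
    rw [hN] at hx hy
    rcases hx with rfl | rfl <;> rcases hy with rfl | rfl
    exacts [absurd rfl hxy, hab, hab.symm, absurd rfl hxy]

theorem cnbhd_subset_of_simplicial {x y : V} (hx : Simplicial G x) (hxy : G.Adj x y) :
    cnbhd G {x} ⊆ cnbhd G {y} := by
  intro z hz
  rw [mem_cnbhd_singleton] at hz ⊢
  rcases hz with rfl | hzx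
  · exact Or.inr hxy
  · by_cases hzy : z = y
    exacts [Or.inl hzy, Or.inr (hx z hzx.symm y hxy hzy)]

theorem mem_dSet_of_mem_lSet {v l : V} (hl : l ∈ lSet G) (hvl : G.Adj v l) : l ∈ dSet G v := by
  refine mem_dSet_iff.2 ⟨hvl, fun z hz hlz => ?_⟩
  obtain ⟨hzv, hvz, -⟩ := mem_n2_singleton.1 hz
  exact hvz (simplicial_of_mem_lSet hl v hvl.symm z hlz hzv.symm)

theorem mem_lSet_of_mem_dSet (h4 : ¬ HasCycleLen G 4) {u v : V} (hv : v ∈ dSet G u) :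
    v ∈ lSet G := by
  have huv := adj_of_mem_dSet hv
  have hnbr : ∀ y, G.Adj v y → y ≠ u → G.Adj u y := fun y hvy hyu =>
    ((mem_cnbhd_singleton.1 (cnbhd_subset_of_mem_dSet hv
      (mem_cnbhd_singleton.2 (Or.inr hvy.symm)))).resolve_left hyu).symm
  by_cases h : ∃ y, G.Adj v y ∧ y ≠ u
  · obtain ⟨y, hvy, hyu⟩ := h
    have hN : G.neighborSet v = {u, y} := by
      refine Set.Subset.antisymm (fun q hvq => ?_) (Set.pair_subset huv.symm hvy)
      by_cases hqu : q = u
      · exact Or.inl hqu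
      · exact Or.inr (commonNeighbors_subsingleton h4 huv.ne
          ⟨hnbr q hvq hqu, hvq⟩ ⟨hnbr y hvy hyu, hvy⟩)
    exact Or.inr ⟨by rw [hN, Set.ncard_pair (Ne.symm hyu)], u, y, huv.symm, hvy, hnbr y hvy hyu⟩
  · push Not at h
    have hN : G.neighborSet v = {u} :=
      Set.Subset.antisymm (fun q hvq => h q hvq) (Set.singleton_subset_iff.2 huv.symm)
    exact Or.inl (by rw [hN, Set.ncard_singleton])

end LSet

section Generating

variable {G : SimpleGraph V}

theorem ne_of_notMem_cnbhd {S : Set V} {x s : V} (hx : x ∉ cnbhd G S) (hs : s ∈ S) : x ≠ s :=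
  fun h => hx (subset_cnbhd (h ▸ hs))

theorem ne_of_adj_of_notMem_cnbhd {S : Set V} {x y s : V} (hx : x ∉ cnbhd G S) (hs : s ∈ S)
    (hys : G.Adj y s) : x ≠ y :=
  fun h => hx (cnbhd_of_adj hs (h ▸ hys))

theorem isMaxIndep_union_of_dominating {A W : Set V} (hA : IsIndep G A) (hW : IsIndep G W)
    (hWA : ∀ x ∈ W, x ∉ cnbhd G A) (hdom : (cnbhd G A)ᶜ ⊆ cnbhd G W) :
    IsMaxIndep G (W ∪ A) := by
  refine isMaxIndep_iff.2
    ⟨hW.union hA fun x hx a ha => not_adj_of_notMem_cnbhd (hWA x hx) ha, fun x => ?_⟩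
  rw [cnbhd_union]
  by_cases hx : x ∈ cnbhd G A
  exacts [Or.inr hx, Or.inl (hdom hx)]

/-- The common completion is `P` together with a maximal independent set of the vertices not
dominated by `A`, `B` or `P`. -/
theorem isGenerating_of_dominating [Finite V] {A B P : Set V} (hA : IsIndep G A)
    (hB : IsIndep G B) (hP : IsIndep G P) (hPA : ∀ p ∈ P, p ∉ cnbhd G A)
    (hPB : ∀ p ∈ P, p ∉ cnbhd G B) (hAB : cnbhd G A \ cnbhd G B ⊆ cnbhd G P)
    (hBA : cnbhd G B \ cnbhd G A ⊆ cnbhd G P) : IsGenerating G A B := by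
  obtain ⟨R, -, hR⟩ := exists_isMaxIndepOn_superset (G := G)
    (A := (cnbhd G A ∪ cnbhd G B ∪ cnbhd G P)ᶜ) (Set.empty_subset _) (Set.pairwise_empty _)
  obtain ⟨hRQ, hRind, hRdom⟩ := isMaxIndepOn_iff.1 hR
  have hRout : ∀ r ∈ R, r ∉ cnbhd G A ∧ r ∉ cnbhd G B ∧ r ∉ cnbhd G P := fun r hr => by
    simpa [not_or, and_assoc] using hRQ hr
  have hW : IsIndep G (P ∪ R) :=
    hP.union hRind fun p hp r hr hpr => (hRout r hr).2.2 (cnbhd_of_adj hp hpr.symm)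
  have hdom : ∀ x, x ∉ cnbhd G A → x ∉ cnbhd G B → x ∈ cnbhd G (P ∪ R) := fun x hxA hxB => by
    rw [cnbhd_union]
    by_cases hxP : x ∈ cnbhd G P
    exacts [Or.inl hxP, Or.inr (hRdom (by simp [hxA, hxB, hxP]))]
  have hPR : cnbhd G P ⊆ cnbhd G (P ∪ R) := cnbhd_mono Set.subset_union_left
  refine ⟨P ∪ R, hW, isMaxIndep_union_of_dominating hA hW ?_ fun x hxA => ?_,
    isMaxIndep_union_of_dominating hB hW ?_ fun x hxB => ?_⟩
  · rintro x (hx | hx)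
    exacts [hPA x hx, (hRout x hx).1]
  · by_cases hxB : x ∈ cnbhd G B
    exacts [hPR (hBA ⟨hxB, hxA⟩), hdom x hxA hxB]
  · rintro x (hx | hx)
    exacts [hPB x hx, (hRout x hx).2.1]
  · by_cases hxA : x ∈ cnbhd G A
    exacts [hPR (hAB ⟨hxA, hxB⟩), hdom x hxA hxB]

theorem WWC.wsum_eq_of_isGenerating [Finite V] {w : V → ℝ} (hw : WWC G w) {A B : Set V}
    (hA : A.Nonempty) (hB : B.Nonempty) (hAB : ∀ a ∈ A, ∀ b ∈ B, G.Adj a b)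
    (h : IsGenerating G A B) : wsum w A = wsum w B := by
  obtain ⟨S, -, hSA, hSB⟩ := h
  obtain ⟨a, ha⟩ := hA
  obtain ⟨b, hb⟩ := hB
  have hdA : Disjoint S A := Set.disjoint_left.2 fun s hs hsA =>
    hSB.1.not_adj (Or.inl hs) (Or.inr hb) (hAB s hsA b hb)
  have hdB : Disjoint S B := Set.disjoint_left.2 fun s hs hsB =>
    hSA.1.not_adj (Or.inl hs) (Or.inr ha) (hAB a ha s hsB).symm
  have hSAB := hw _ _ hSA hSB
  rw [wsum_union hdA, wsum_union hdB] at hSAB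
  linarith

/-- Each neighbour `x` of `c` not dominated by `B` has a neighbour `f x` at distance two from
`c`; excluding `C₄` makes `x` the only neighbour of `c` adjacent to `f x`, and excluding `C₅`
makes the `f x` pairwise nonadjacent. -/
theorem exists_private_dominating (h4 : ¬ HasCycleLen G 4) (h5 : ¬ HasCycleLen G 5) {c : V}
    {B : Set V} (hB : B ⊆ G.neighborSet c) (hBne : B.Nonempty)
    (hX : ∀ x, G.Adj c x → x ∉ cnbhd G B → ∃ z ∈ n2 G {c}, G.Adj x z) :
    ∃ P : Set V, IsIndep G P ∧ cnbhd G {c} \ cnbhd G B ⊆ cnbhd G P ∧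
      ∀ p ∈ P, p ∉ cnbhd G {c} ∧ p ∉ cnbhd G B ∧
        ∃ x, G.Adj c x ∧ x ∉ cnbhd G B ∧ G.Adj x p := by
  choose! f hfc hxf using hX
  set X := {x | G.Adj c x ∧ x ∉ cnbhd G B}
  have hfc' : ∀ x ∈ X, f x ≠ c ∧ ¬ G.Adj c (f x) := fun x hx =>
    (mem_n2_singleton.1 (hfc x hx.1 hx.2)).imp_right And.left
  have hfB : ∀ x ∈ X, f x ∉ cnbhd G B := by
    rintro x hx (hfx | ⟨b, hb, hfb⟩)
    · exact (hfc' x hx).2 (hB hfx)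
    · have hbx : b = x := commonNeighbors_subsingleton h4 (hfc' x hx).1.symm
        ⟨hB hb, hfb⟩ ⟨hx.1, (hxf x hx.1 hx.2).symm⟩
      exact hx.2 (subset_cnbhd (hbx ▸ hb))
  refine ⟨f '' X, ?_, ?_, ?_⟩
  · rintro _ ⟨x, hx, rfl⟩ _ ⟨y, hy, rfl⟩ hne hfxy
    have hxy : x ≠ y := by rintro rfl; exact hne rfl
    exact h5 (hasCycleLen_five (hfc' x hx).1.symm (hfc' y hy).1.symm
      (fun h => (hfc' y hy).2 (h ▸ hx.1)) hxy (fun h => (hfc' x hx).2 (h ▸ hy.1))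
      hx.1 (hxf x hx.1 hx.2) hfxy (hxf y hy.1 hy.2).symm hy.1.symm)
  · rintro x ⟨hxc, hxB⟩
    rcases mem_cnbhd_singleton.1 hxc with rfl | hxc
    · obtain ⟨b, hb⟩ := hBne
      exact absurd (cnbhd_of_adj hb (hB hb)) hxB
    · exact cnbhd_of_adj (Set.mem_image_of_mem f ⟨hxc.symm, hxB⟩) (hxf x hxc.symm hxB)
  · rintro _ ⟨x, hx, rfl⟩
    refine ⟨fun h => ?_, hfB x hx, x, hx.1, hx.2, hxf x hx.1 hx.2⟩
    exact (mem_cnbhd_singleton.1 h).elim (hfc' x hx).1 fun h => (hfc' x hx).2 h.symm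

theorem exists_n2_of_notMem_cnbhd {c x : V} {M : Set V} (hM : IsMaxIndepOn G (dSet G c) M)
    (hcx : G.Adj c x) (hx : x ∉ cnbhd G M) : ∃ z ∈ n2 G {c}, G.Adj x z :=
  exists_n2_of_notMem_dSet hcx fun hxD => hx ((isMaxIndepOn_iff.1 hM).2.2 hxD)

theorem isGenerating_star [Finite V] (h4 : ¬ HasCycleLen G 4) (h5 : ¬ HasCycleLen G 5)
    {c : V} {M : Set V} (hM : IsMaxIndepOn G (dSet G c) M) (hMne : M.Nonempty) :
    IsGenerating G {c} M := by
  obtain ⟨hMD, hMind, -⟩ := isMaxIndepOn_iff.1 hM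
  obtain ⟨P, hP, hcov, hPout⟩ := exists_private_dominating h4 h5
    (hMD.trans fun _ => adj_of_mem_dSet) hMne fun x hcx hx => exists_n2_of_notMem_cnbhd hM hcx hx
  exact isGenerating_of_dominating (Set.pairwise_singleton c _) hMind hP
    (fun p hp => (hPout p hp).1) (fun p hp => (hPout p hp).2.1) hcov
    fun x hx => absurd (cnbhd_subset_of_subset_dSet hMD hx.1) hx.2

/-- Both ends of the edge `uv` get private neighbours; a `C₆` through `u` and `v` is what would
make two of them adjacent. -/
theorem isGenerating_edge_star [Finite V] (h4 : ¬ HasCycleLen G 4) (h5 : ¬ HasCycleLen G 5)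
    (h6 : ¬ HasCycleLen G 6) {u v : V} (huv : G.Adj u v) (hDv : dSet G v = ∅) {Y : Set V}
    (hY : IsMaxIndepOn G (dSet G u) Y) (hvY : ∀ y ∈ Y, ¬ G.Adj v y) :
    IsGenerating G {u} (insert v Y) := by
  obtain ⟨hYD, hYind, -⟩ := isMaxIndepOn_iff.1 hY
  have hYu : cnbhd G Y ⊆ cnbhd G {u} := cnbhd_subset_of_subset_dSet hYD
  obtain ⟨P, hP, hcovP, hPout⟩ := exists_private_dominating h4 h5 (c := u) (B := insert v Y)
    (Set.insert_subset huv fun _ hy => adj_of_mem_dSet (hYD hy)) (Set.insert_nonempty v Y)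
    fun x hux hx => exists_n2_of_notMem_cnbhd hY hux
      fun h => hx (cnbhd_mono (Set.subset_insert v Y) h)
  obtain ⟨Q, hQ, hcovQ, hQout⟩ := exists_private_dominating h4 h5 (c := v) (B := {u})
    (Set.singleton_subset_iff.2 huv.symm) (Set.singleton_nonempty u)
    fun x hvx _ => exists_n2_of_notMem_dSet hvx (by simp [hDv])
  have hQB : ∀ q ∈ Q, q ∉ cnbhd G (insert v Y) := fun q hq h => by
    rw [cnbhd_insert] at h
    exact h.elim (hQout q hq).1 fun h => (hQout q hq).2.1 (hYu h)
  have hPQ : ∀ p ∈ P, ∀ q ∈ Q, ¬ G.Adj p q := by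
    intro p hp q hq hpq
    obtain ⟨hpu, hpB, x, hux, hxB, hxp⟩ := hPout p hp
    obtain ⟨hqv, hqu, y, hvy, hyu, hyq⟩ := hQout q hq
    have hu := Set.mem_singleton u
    have hv := Set.mem_insert v Y
    exact h6 (hasCycleLen_six (ne_of_notMem_cnbhd hpu hu).symm (ne_of_notMem_cnbhd hqu hu).symm
      (ne_of_notMem_cnbhd hyu hu).symm (ne_of_adj_of_notMem_cnbhd hqu hu hux.symm).symm
      (ne_of_adj_of_notMem_cnbhd hyu hu hux.symm).symm (ne_of_notMem_cnbhd hxB hv)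
      (ne_of_adj_of_notMem_cnbhd hpB hv hvy.symm) (ne_of_notMem_cnbhd hpB hv)
      (ne_of_notMem_cnbhd hqv (Set.mem_singleton v)) hux hxp hpq hyq.symm hvy.symm huv.symm)
  refine isGenerating_of_dominating (Set.pairwise_singleton u _) (hYind.insert hvY)
    (hP.union hQ hPQ) ?_ ?_ (hcovP.trans (cnbhd_mono Set.subset_union_left)) ?_
  · rintro p (hp | hp)
    exacts [(hPout p hp).1, (hQout p hp).2.1]
  · rintro p (hp | hp)
    exacts [(hPout p hp).2.1, hQB p hp]
  · rintro x ⟨hxB, hxu⟩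
    rw [cnbhd_insert] at hxB
    rcases hxB with hxv | hxY
    · exact cnbhd_mono Set.subset_union_right (hcovQ ⟨hxv, hxu⟩)
    · exact absurd (hYu hxY) hxu

end Generating

/-- Condition (i) of the theorem. -/
def WeightEqOnDSets (G : SimpleGraph V) (w : V → ℝ) : Prop :=
  ∀ v : V, v ∉ lSet G → ∀ M : Set V, IsMaxIndepOn G (dSet G v) M → w v = wsum w M

/-- Condition (ii) of the theorem. -/
def WeightEqOnLEdges (G : SimpleGraph V) (w : V → ℝ) : Prop :=
  ∀ x y : V, G.Adj x y → x ∈ lSet G → y ∈ lSet G → w x = w y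

theorem exists_adj_dist_lt {G : SimpleGraph V} (hG : G.Connected) {v l : V} (hvl : v ≠ l) :
    ∃ u, G.Adj v u ∧ G.dist u l < G.dist v l := by
  obtain ⟨p, hp⟩ := hG.exists_walk_length_eq_dist v l
  cases p with
  | nil => exact absurd rfl hvl
  | cons h q =>
    have := SimpleGraph.dist_le q
    rw [SimpleGraph.Walk.length_cons] at hp
    exact ⟨_, h, by omega⟩

section Forward

variable [Finite V] {G : SimpleGraph V} {w : V → ℝ}

theorem WWC.weightEqOnLEdges (hw : WWC G w) : WeightEqOnLEdges G w := by
  intro x y hxy hx hy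
  have hgen : IsGenerating G {x} {y} := isGenerating_of_dominating (Set.pairwise_singleton x _)
    (Set.pairwise_singleton y _) (Set.pairwise_empty _) (fun _ h => h.elim) (fun _ h => h.elim)
    (fun z hz => absurd (cnbhd_subset_of_simplicial (simplicial_of_mem_lSet hx) hxy hz.1) hz.2)
    (fun z hz => absurd (cnbhd_subset_of_simplicial (simplicial_of_mem_lSet hy) hxy.symm hz.1) hz.2)
  simpa only [wsum_singleton] using hw.wsum_eq_of_isGenerating (Set.singleton_nonempty x)
    (Set.singleton_nonempty y) (by rintro a rfl b rfl; exact hxy) hgen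

theorem WWC.weightEqOnDSets (hw : WWC G w) (hconn : G.Connected) (h4 : ¬ HasCycleLen G 4)
    (h5 : ¬ HasCycleLen G 5) (h6 : ¬ HasCycleLen G 6) (hL : (lSet G).Nonempty) :
    WeightEqOnDSets G w := by
  obtain ⟨l, hl⟩ := hL
  intro v hv M hM
  induction hn : G.dist v l using Nat.strong_induction_on generalizing v M with
  | _ n ih =>
  rcases M.eq_empty_or_nonempty with rfl | hMne
  · have hDv : dSet G v = ∅ := isMaxIndepOn_empty_iff.1 hM
    obtain ⟨u, hvu, hul⟩ := exists_adj_dist_lt hconn fun h : v = l => hv (h ▸ hl)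
    have hu : u ∉ lSet G := fun hu => by simpa [hDv] using mem_dSet_of_mem_lSet hu hvu
    obtain ⟨Y, -, hY⟩ := exists_isMaxIndepOn_superset (Set.empty_subset (dSet G u))
      (Set.pairwise_empty (fun a b => ¬ G.Adj a b))
    have hvY : ∀ y ∈ Y, ¬ G.Adj v y := fun y hy hvy => by
      simpa [hDv] using mem_dSet_of_adj_of_adj h4 (hY.1 hy) hvu.symm hvy
    have hvY' : v ∉ Y := fun h => hv (mem_lSet_of_mem_dSet h4 (hY.1 h))
    have huvY := hw.wsum_eq_of_isGenerating (Set.singleton_nonempty u) (Set.insert_nonempty v Y)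
      (by rintro a rfl b (rfl | hb); exacts [hvu.symm, adj_of_mem_dSet (hY.1 hb)])
      (isGenerating_edge_star h4 h5 h6 hvu.symm hDv hY hvY)
    rw [wsum_singleton, wsum_insert hvY', ih _ (hn ▸ hul) u hu Y hY rfl] at huvY
    rw [wsum_empty]
    linarith
  · simpa only [wsum_singleton] using hw.wsum_eq_of_isGenerating (Set.singleton_nonempty v) hMne
      (by rintro a rfl m hm; exact adj_of_mem_dSet (hM.1 hm)) (isGenerating_star h4 h5 hM hMne)

end Forward

section Backward

variable {G : SimpleGraph V} {w : V → ℝ}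

/-- Two maximal independent sets are connected through a third one sharing more with each,
unless every vertex of `S \ T` is adjacent to every vertex of `T \ S`. -/
theorem wwc_of_forall_joined [Finite V]
    (h : ∀ S T, IsMaxIndep G S → IsMaxIndep G T → (∀ x ∈ S \ T, ∀ y ∈ T \ S, G.Adj x y) →
      wsum w S = wsum w T) : WWC G w := by
  intro S T hS hT
  induction hn : (S ∩ T)ᶜ.ncard using Nat.strong_induction_on generalizing S T with
  | _ n ih =>
  by_cases hjoin : ∀ x ∈ S \ T, ∀ y ∈ T \ S, G.Adj x y
  · exact h S T hS hT hjoin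
  push Not at hjoin
  obtain ⟨x, ⟨hxS, hxT⟩, y, ⟨hyT, hyS⟩, hxy⟩ := hjoin
  have hind : IsIndep G (insert x (insert y (S ∩ T))) := by
    refine ((hT.1.mono Set.inter_subset_right).insert fun t ht => hT.1.not_adj hyT ht.2).insert ?_
    rintro t (rfl | ht)
    exacts [hxy, hS.1.not_adj hxS ht.1]
  obtain ⟨U, hU, hUmax⟩ := exists_isMaxIndep_superset hind
  have hlt : ∀ X : Set V, S ∩ T ⊂ X ∩ U → (X ∩ U)ᶜ.ncard < n := fun X hX =>
    hn ▸ Set.ncard_lt_ncard (compl_lt_compl_iff_lt.2 hX) (Set.toFinite _)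
  have hSTU : S ∩ T ⊆ U := fun t ht => hU (by simp [ht])
  have hSU : S ∩ T ⊂ S ∩ U := (Set.ssubset_iff_of_subset (Set.subset_inter
    Set.inter_subset_left hSTU)).2 ⟨x, ⟨hxS, hU (Set.mem_insert x _)⟩, fun h => hxT h.2⟩
  have hTU : S ∩ T ⊂ T ∩ U := (Set.ssubset_iff_of_subset (Set.subset_inter
    Set.inter_subset_right hSTU)).2 ⟨y, ⟨hyT, hU (by simp)⟩, fun h => hyS h.1⟩
  rw [ih _ (hlt S hSU) S U hS hUmax rfl, ih _ (hlt T hTU) T U hT hUmax rfl]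

theorem subsingleton_or_subsingleton_of_joined (h4 : ¬ HasCycleLen G 4) {A B : Set V}
    (h : ∀ a ∈ A, ∀ b ∈ B, G.Adj a b) : A.Subsingleton ∨ B.Subsingleton := by
  by_contra! hAB
  obtain ⟨⟨a, ha, a', ha', haa'⟩, ⟨b, hb, b', hb', hbb'⟩⟩ := hAB
  exact hbb' (commonNeighbors_subsingleton h4 haa' ⟨h a ha b hb, h a' ha' b hb⟩
    ⟨h a ha b' hb', h a' ha' b' hb'⟩)

theorem dSet_subset_cnbhd_of_isMaxIndep {S : Set V} (hS : IsMaxIndep G S) {m v : V}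
    (hm : m ∉ S) (hmS : ∀ s ∈ S, G.Adj m s → s = v) : dSet G m ⊆ cnbhd G {v} := by
  intro x hx
  by_contra hxv
  rw [mem_cnbhd_singleton, not_or] at hxv
  rcases (isMaxIndep_iff.1 hS).2 x with hxS | ⟨s, hs, hxs⟩
  · exact hxv.1 (hmS x hxS (adj_of_mem_dSet hx))
  · have hsv : s ≠ v := fun h => hxv.2 (h ▸ hxs)
    exact (mem_dSet_iff.1 hx).2 s (mem_n2_singleton_of_adj (fun h => hm (h ▸ hs))
      (fun h => hsv (hmS s hs h)) (adj_of_mem_dSet hx) hxs) hxs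

theorem weight_eq_wsum_of_mem_lSet (hi : WeightEqOnDSets G w) (hii : WeightEqOnLEdges G w)
    {v : V} (hv : v ∈ lSet G) {M : Set V} (hMv : ∀ m ∈ M, G.Adj v m) (hM : IsIndep G M)
    (hMne : M.Nonempty) (hDM : ∀ m ∈ M, dSet G m ⊆ cnbhd G {v}) : w v = wsum w M := by
  obtain ⟨m, hm⟩ := hMne
  have hMsub : M.Subsingleton := fun x hx y hy => by_contra fun hxy =>
    hM.not_adj hx hy (simplicial_of_mem_lSet hv x (hMv x hx) y (hMv y hy) hxy)
  obtain rfl := hMsub.eq_singleton_of_mem hm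
  rw [wsum_singleton]
  by_cases hmL : m ∈ lSet G
  · exact hii v m (hMv m rfl) hv hmL
  · have hvD : IsMaxIndepOn G (dSet G m) {v} := isMaxIndepOn_iff.2
      ⟨Set.singleton_subset_iff.2 (mem_dSet_of_mem_lSet hv (hMv m rfl).symm),
        Set.pairwise_singleton v _, hDM m rfl⟩
    simpa only [wsum_singleton] using (hi m hmL {v} hvD).symm

theorem notMem_cnbhd_of_cnbhd_subset {M : Set V} (hM : IsIndep G M) {m m' x y : V} (hm : m ∈ M)
    (hm' : m' ∈ M) (hne : m ≠ m') (hx : cnbhd G {x} ⊆ cnbhd G {m})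
    (hy : cnbhd G {y} ⊆ cnbhd G {m'}) : x ∉ cnbhd G {y} := fun hxy => by
  rcases mem_cnbhd_singleton.1 (hx (mem_cnbhd_singleton_comm.1 (hy hxy))) with h | h
  exacts [hne h.symm, hM.not_adj hm' hm h]

theorem isIndep_biUnion_of_cnbhd_subset {M : Set V} {φ : V → Set V} (hM : IsIndep G M)
    (hφ : ∀ m ∈ M, (φ m).Subsingleton) (hφM : ∀ m ∈ M, ∀ x ∈ φ m, cnbhd G {x} ⊆ cnbhd G {m}) :
    IsIndep G (⋃ m ∈ M, φ m) := by
  intro x hx y hy hxy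
  simp only [Set.mem_iUnion₂] at hx hy
  obtain ⟨m, hm, hxm⟩ := hx
  obtain ⟨m', hm', hym'⟩ := hy
  by_cases hmm' : m = m'
  · subst hmm'
    exact absurd (hφ m hm hxm hym') hxy
  · exact fun h => notMem_cnbhd_of_cnbhd_subset hM hm hm' hmm' (hφM m hm x hxm)
      (hφM m' hm' y hym') (mem_cnbhd_singleton.2 (Or.inr h))

theorem pairwiseDisjoint_of_cnbhd_subset {M : Set V} {φ : V → Set V} (hM : IsIndep G M)
    (hφM : ∀ m ∈ M, ∀ x ∈ φ m, cnbhd G {x} ⊆ cnbhd G {m}) : M.PairwiseDisjoint φ :=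
  fun m hm m' hm' hne => Set.disjoint_left.2 fun x hx hx' =>
    notMem_cnbhd_of_cnbhd_subset hM hm hm' hne (hφM m hm x hx) (hφM m' hm' x hx')
      (mem_cnbhd_singleton.2 (Or.inl rfl))

theorem dSet_subset_commonNeighbors (h4 : ¬ HasCycleLen G 4) {v m : V} (hv : v ∉ lSet G)
    (hDm : dSet G m ⊆ cnbhd G {v}) : dSet G m ⊆ G.commonNeighbors v m := fun _ hx =>
  ⟨((mem_cnbhd_singleton.1 (hDm hx)).resolve_left
    fun h => hv (h ▸ mem_lSet_of_mem_dSet h4 hx)).symm, adj_of_mem_dSet hx⟩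

/-- `M` is traded for a maximal independent subset of `D(v)` of the same weight: each
`m ∈ D(v)` is kept, and each other `m` is replaced by `D(m)`, which has at most one vertex. -/
theorem weight_eq_wsum_of_notMem_lSet [Finite V] (h4 : ¬ HasCycleLen G 4)
    (hi : WeightEqOnDSets G w) {v : V} (hv : v ∉ lSet G) {M : Set V}
    (hMv : ∀ m ∈ M, G.Adj v m) (hM : IsIndep G M) (hDM : ∀ m ∈ M, dSet G m ⊆ cnbhd G {v})
    (hcov : dSet G v ⊆ cnbhd G M) : w v = wsum w M := by
  classical
  have hDm := fun m (hm : m ∈ M) => dSet_subset_commonNeighbors h4 hv (hDM m hm)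
  set φ : V → Set V := fun m => if m ∈ dSet G v then {m} else dSet G m
  have hφ : ∀ m, m ∈ dSet G v ∧ φ m = {m} ∨ m ∉ dSet G v ∧ φ m = dSet G m := fun m => by
    by_cases hmv : m ∈ dSet G v
    exacts [Or.inl ⟨hmv, if_pos hmv⟩, Or.inr ⟨hmv, if_neg hmv⟩]
  have hφD : ∀ m ∈ M, φ m ⊆ dSet G v := fun m hm => by
    rcases hφ m with ⟨hmv, hφm⟩ | ⟨-, hφm⟩ <;> rw [hφm]
    · exact Set.singleton_subset_iff.2 hmv
    · exact fun x hx => mem_dSet_of_adj_of_adj h4 hx (hMv m hm).symm (hDm m hm hx).1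
  have hφsub : ∀ m ∈ M, (φ m).Subsingleton := fun m hm => by
    rcases hφ m with ⟨-, hφm⟩ | ⟨-, hφm⟩ <;> rw [hφm]
    · exact Set.subsingleton_singleton
    · exact (commonNeighbors_subsingleton h4 (hMv m hm).ne).anti (hDm m hm)
  have hφM : ∀ m ∈ M, ∀ x ∈ φ m, cnbhd G {x} ⊆ cnbhd G {m} := fun m hm x hx => by
    rcases hφ m with ⟨-, hφm⟩ | ⟨-, hφm⟩ <;> rw [hφm] at hx
    · rw [Set.mem_singleton_iff.1 hx]
    · exact cnbhd_subset_of_mem_dSet hx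
  have hφw : ∀ m ∈ M, w m = wsum w (φ m) := fun m hm => by
    rcases hφ m with ⟨-, hφm⟩ | ⟨hmv, hφm⟩
    · rw [hφm, wsum_singleton]
    · rw [hφm]
      exact hi m (fun hmL => hmv (mem_dSet_of_mem_lSet hmL (hMv m hm))) _
        (isMaxIndepOn_self (hφm ▸ hφsub m hm))
  have hmem : ∀ m ∈ M, ∀ x ∈ φ m, x ∈ ⋃ m ∈ M, φ m := fun m hm x hx => Set.mem_biUnion hm hx
  have hmax : IsMaxIndepOn G (dSet G v) (⋃ m ∈ M, φ m) := by
    refine isMaxIndepOn_iff.2 ⟨Set.iUnion₂_subset hφD,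
      isIndep_biUnion_of_cnbhd_subset hM hφsub hφM, fun c hc => ?_⟩
    rcases hcov hc with hcM | ⟨m, hm, hcm⟩
    · rcases hφ c with ⟨-, hφc⟩ | ⟨hcv, -⟩
      exacts [subset_cnbhd (hmem c hcM c (hφc ▸ rfl)), absurd hc hcv]
    · rcases hφ m with ⟨-, hφm⟩ | ⟨-, hφm⟩
      · exact cnbhd_of_adj (hmem m hm m (hφm ▸ rfl)) hcm
      · exact subset_cnbhd
          (hmem m hm c (hφm ▸ mem_dSet_of_adj_of_adj h4 hc (hMv m hm) hcm.symm))
  calc w v = wsum w (⋃ m ∈ M, φ m) := hi v hv _ hmax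
    _ = ∑ᶠ m ∈ M, wsum w (φ m) :=
      finsum_mem_biUnion (pairwiseDisjoint_of_cnbhd_subset hM hφM) (Set.toFinite M)
        fun _ _ => Set.toFinite _
    _ = wsum w M := (finsum_mem_congr rfl hφw).symm

theorem wsum_eq_of_diff_eq_singleton [Finite V] (h4 : ¬ HasCycleLen G 4) (hi : WeightEqOnDSets G w)
    (hii : WeightEqOnLEdges G w) {S T : Set V} (hS : IsMaxIndep G S) (hT : IsMaxIndep G T)
    {v : V} (hST : S \ T = {v}) (hjoin : ∀ m ∈ T \ S, G.Adj v m) : wsum w S = wsum w T := by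
  have hv : v ∈ S \ T := hST.symm ▸ Set.mem_singleton v
  have hSv : ∀ s ∈ S, s ≠ v → s ∈ T := fun s hs hsv => by
    by_contra hsT
    have hs' : s ∈ S \ T := ⟨hs, hsT⟩
    rw [hST] at hs'
    exact hsv hs'
  have hMne : (T \ S).Nonempty := by
    by_contra h
    rw [Set.not_nonempty_iff_eq_empty, Set.sdiff_eq_empty] at h
    exact hv.2 (hT.2 S hS.1 h ▸ hv.1)
  have hDM : ∀ m ∈ T \ S, dSet G m ⊆ cnbhd G {v} := fun m hm =>
    dSet_subset_cnbhd_of_isMaxIndep hS hm.2 fun s hs hms =>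
      by_contra fun hsv => hT.1.not_adj hm.1 (hSv s hs hsv) hms
  have hcov : dSet G v ⊆ cnbhd G (T \ S) := fun c hc => by
    by_cases hcT : c ∈ T
    · by_cases hcS : c ∈ S
      · exact absurd (adj_of_mem_dSet hc) (hS.1.not_adj hv.1 hcS)
      · exact subset_cnbhd ⟨hcT, hcS⟩
    obtain ⟨s, hs, hcs⟩ := ((isMaxIndep_iff.1 hT).2 c).resolve_left hcT
    refine cnbhd_of_adj ⟨hs, fun hsS => ?_⟩ hcs
    exact (mem_dSet_iff.1 hc).2 s (mem_n2_singleton_of_adj (fun h => hv.2 (h ▸ hs))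
      (hS.1.not_adj hv.1 hsS) (adj_of_mem_dSet hc) hcs) hcs
  have hvM : w v = wsum w (T \ S) := by
    by_cases hvL : v ∈ lSet G
    · exact weight_eq_wsum_of_mem_lSet hi hii hvL hjoin (hT.1.mono Set.sdiff_subset) hMne hDM
    · exact weight_eq_wsum_of_notMem_lSet h4 hi hvL hjoin (hT.1.mono Set.sdiff_subset) hDM hcov
  rw [← wsum_inter_add_diff S T, ← wsum_inter_add_diff T S, hST, wsum_singleton, hvM,
    Set.inter_comm]

theorem wwc_of_weightEq [Finite V] (h4 : ¬ HasCycleLen G 4) (hi : WeightEqOnDSets G w)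
    (hii : WeightEqOnLEdges G w) : WWC G w := by
  have hsub : ∀ S T, IsMaxIndep G S → IsMaxIndep G T → (∀ x ∈ S \ T, ∀ y ∈ T \ S, G.Adj x y) →
      (S \ T).Subsingleton → wsum w S = wsum w T := by
    intro S T hS hT hjoin hST
    rcases hST.eq_empty_or_singleton with h | ⟨v, hv⟩
    · rw [hS.2 T hT.1 (Set.sdiff_eq_empty.1 h)]
    · exact wsum_eq_of_diff_eq_singleton h4 hi hii hS hT hv
        (hjoin v (hv.symm ▸ Set.mem_singleton v))
  refine wwc_of_forall_joined fun S T hS hT hjoin => ?_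
  rcases subsingleton_or_subsingleton_of_joined h4 hjoin with h | h
  · exact hsub S T hS hT hjoin h
  · exact (hsub T S hT hS (fun y hy x hx => (hjoin x hx y hy).symm) h).symm

end Backward

end WC

open WC

/-- in a connected graph with no `C₄`, `C₅`, `C₆` and `L(G) ≠ ∅`,
`G` is `w`-well-covered iff (i) `w(v) = w(M)` for every `v ∉ L(G)` and every
maximal independent set `M` of the subgraph induced by `D(v)`, and
(ii) `w(x) = w(y)` for every edge `xy` with both endpoints in `L(G)`. -/
theorem stmt_12 {V : Type*} [Fintype V] (G : SimpleGraph V) (hconn : G.Connected)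
    (h4 : ¬ HasCycleLen G 4) (h5 : ¬ HasCycleLen G 5) (h6 : ¬ HasCycleLen G 6)
    (hL : (lSet G).Nonempty) (w : V → ℝ) :
    WWC G w ↔
      ((∀ v : V, v ∉ lSet G →
          ∀ M : Set V, IsMaxIndepOn G (dSet G v) M → w v = wsum w M) ∧
       (∀ x y : V, G.Adj x y → x ∈ lSet G → y ∈ lSet G → w x = w y)) :=
  ⟨fun hw => ⟨hw.weightEqOnDSets hconn h4 h5 h6 hL, hw.weightEqOnLEdges⟩,
    fun ⟨hi, hii⟩ => wwc_of_weightEq h4 hi hii⟩
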